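/- Let u : ℝ³ → ℝ be a smooth solution of the rotated Euler equation u_{txy} = J(u, u_{xy}), and let A : ℝ → ℝ be an arbitrary smooth function. Then the function φ₇(A) := −A(t) u_y − A′(t) x satisfies the linearized equation ℓ_F(φ₇(A)) = 0 at every point, i.e. φ₇(A) generates an infinitesimal symmetry of the equation for every smooth A. -/

import Mathlib

noncomputable section

/-- Partial derivative in `t` of a function on `ℝ³ = ℝ × ℝ × ℝ` (coordinates `(t, x, y)`). -/
def Dt (f : ℝ × ℝ × ℝ → ℝ) : ℝ × ℝ × ℝ → ℝ := fun r => fderiv ℝ f r (1, 0, 0)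

/-- Partial derivative in `x`. -/
def Dx (f : ℝ × ℝ × ℝ → ℝ) : ℝ × ℝ × ℝ → ℝ := fun r => fderiv ℝ f r (0, 1, 0)

/-- Partial derivative in `y`. -/
def Dy (f : ℝ × ℝ × ℝ → ℝ) : ℝ × ℝ × ℝ → ℝ := fun r => fderiv ℝ f r (0, 0, 1)

/-- The Jacobian bracket `J(a,b) = aₓ b_y − a_y bₓ`. -/
def Jb (a b : ℝ × ℝ × ℝ → ℝ) : ℝ × ℝ × ℝ → ℝ :=
  fun r => Dx a r * Dy b r - Dy a r * Dx b r

/-- `E(u) = x uₓ + y u_y − 2 u`. -/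
def Ee (u : ℝ × ℝ × ℝ → ℝ) : ℝ × ℝ × ℝ → ℝ :=
  fun r => r.2.1 * Dx u r + r.2.2 * Dy u r - 2 * u r

/-- The linearization operator `ℓ_F(q) = q_txy − J(q, u_xy) − J(u, q_xy)` of the
rotated Euler equation `u_txy = J(u, u_xy)`. -/
def lF (u q : ℝ × ℝ × ℝ → ℝ) : ℝ × ℝ × ℝ → ℝ :=
  fun r => Dt (Dx (Dy q)) r - Jb q (Dx (Dy u)) r - Jb u (Dx (Dy q)) r

/-- The adjoint linearization operator `ℓ*_F(p) = −(p_t − J(u,p))_xy − J(u_xy, p)` of the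
rotated Euler equation. -/
def lFs (u p : ℝ × ℝ × ℝ → ℝ) : ℝ × ℝ × ℝ → ℝ :=
  fun r => -(Dx (Dy (fun z => Dt p z - Jb u p z)) r) - Jb (Dx (Dy u)) p r

/-- The Laplacian `Δf = f_xx + f_yy` (in the spatial variables `x`, `y`). -/
def Lap (f : ℝ × ℝ × ℝ → ℝ) : ℝ × ℝ × ℝ → ℝ :=
  fun r => Dx (Dx f) r + Dy (Dy f) r

/-- The linearization operator `ℓ_F(q) = Δq_t − J(q, Δu) − J(u, Δq)` of the
two-dimensional Euler equation `Δu_t = J(u, Δu)`. -/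
def lFD (u q : ℝ × ℝ × ℝ → ℝ) : ℝ × ℝ × ℝ → ℝ :=
  fun r => Lap (Dt q) r - Jb q (Lap u) r - Jb u (Lap q) r

/-- The adjoint linearization operator `ℓ*_F(p) = −Δ(p_t − J(u,p)) − J(Δu, p)` of the
two-dimensional Euler equation. -/
def lFsD (u p : ℝ × ℝ × ℝ → ℝ) : ℝ × ℝ × ℝ → ℝ :=
  fun r => -(Lap (fun z => Dt p z - Jb u p z) r) - Jb (Lap u) p r

/-! ### Auxiliary directional-derivative toolkit -/

def vt : ℝ × ℝ × ℝ := (1, 0, 0)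
def vx : ℝ × ℝ × ℝ := (0, 1, 0)
def vy : ℝ × ℝ × ℝ := (0, 0, 1)

/-- Directional derivative in direction `v`. -/
def Dd (v : ℝ × ℝ × ℝ) (f : ℝ × ℝ × ℝ → ℝ) : ℝ × ℝ × ℝ → ℝ := fun r => fderiv ℝ f r v

lemma Dt_eq : Dt = Dd vt := rfl
lemma Dx_eq : Dx = Dd vx := rfl
lemma Dy_eq : Dy = Dd vy := rfl

lemma Dd_smooth {f : ℝ × ℝ × ℝ → ℝ} (hf : ContDiff ℝ (⊤ : ℕ∞) f) (v : ℝ × ℝ × ℝ) :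
    ContDiff ℝ (⊤ : ℕ∞) (Dd v f) :=
  (ContinuousLinearMap.apply ℝ ℝ v).contDiff.comp (hf.fderiv_right (by simp))

lemma Dd_sub {f g : ℝ × ℝ × ℝ → ℝ} {s : ℝ × ℝ × ℝ} (hf : DifferentiableAt ℝ f s)
    (hg : DifferentiableAt ℝ g s) (v : ℝ × ℝ × ℝ) :
    Dd v (fun z => f z - g z) s = Dd v f s - Dd v g s := by
  show fderiv ℝ (fun z => f z - g z) s v = _
  rw [fderiv_fun_sub hf hg]; simp [Dd]

lemma Dd_neg {f : ℝ × ℝ × ℝ → ℝ} (v s : ℝ × ℝ × ℝ) :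
    Dd v (fun z => -(f z)) s = -(Dd v f s) := by
  show fderiv ℝ (fun z => -(f z)) s v = _
  rw [fderiv_fun_neg]; simp [Dd]

lemma Dd_mul {f g : ℝ × ℝ × ℝ → ℝ} {s : ℝ × ℝ × ℝ} (hf : DifferentiableAt ℝ f s)
    (hg : DifferentiableAt ℝ g s) (v : ℝ × ℝ × ℝ) :
    Dd v (fun z => f z * g z) s = Dd v f s * g s + f s * Dd v g s := by
  show fderiv ℝ (fun z => f z * g z) s v = _
  rw [fderiv_fun_mul hf hg]
  simp [Dd, smul_eq_mul]
  ring

lemma Dd_A {A : ℝ → ℝ} (hA : ContDiff ℝ (⊤ : ℕ∞) A) (v s : ℝ × ℝ × ℝ) :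
    Dd v (fun z : ℝ × ℝ × ℝ => A z.1) s = deriv A s.1 * v.1 := by
  have h : HasFDerivAt (fun z : ℝ × ℝ × ℝ => A z.1)
      ((ContinuousLinearMap.smulRight (1 : ℝ →L[ℝ] ℝ) (deriv A s.1)).comp
        (ContinuousLinearMap.fst ℝ ℝ (ℝ × ℝ))) s :=
    ((hA.differentiable (by simp) s.1).hasDerivAt.hasFDerivAt).comp s hasFDerivAt_fst
  show fderiv ℝ _ s v = _
  rw [h.fderiv]
  simp [mul_comm]

lemma Dd_x (v s : ℝ × ℝ × ℝ) : Dd v (fun z : ℝ × ℝ × ℝ => z.2.1) s = v.2.1 := by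
  have h : HasFDerivAt (fun z : ℝ × ℝ × ℝ => z.2.1)
      ((ContinuousLinearMap.fst ℝ ℝ ℝ).comp (ContinuousLinearMap.snd ℝ ℝ (ℝ × ℝ))) s :=
    hasFDerivAt_fst.comp s hasFDerivAt_snd
  show fderiv ℝ _ s v = _
  rw [h.fderiv]
  simp

lemma Dd_swap {f : ℝ × ℝ × ℝ → ℝ} (hf : ContDiff ℝ (⊤ : ℕ∞) f) (v w : ℝ × ℝ × ℝ) :
    Dd v (Dd w f) = Dd w (Dd v f) := by
  funext r
  have hd : DifferentiableAt ℝ (fderiv ℝ f) r :=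
    (hf.fderiv_right (m := 1) (WithTop.coe_le_coe.mpr le_top)).differentiable one_ne_zero r
  have e : ∀ a b : ℝ × ℝ × ℝ,
      fderiv ℝ (fun z => fderiv ℝ f z a) r b = fderiv ℝ (fderiv ℝ f) r b a := by
    intro a b
    rw [show (fun z => fderiv ℝ f z a) = fun z => (fderiv ℝ f z) a from rfl,
      fderiv_clm_apply hd (differentiableAt_const a)]
    simp
  show fderiv ℝ (fun z => fderiv ℝ f z w) r v = fderiv ℝ (fun z => fderiv ℝ f z v) r w
  rw [e w v, e v w]
  exact (hf.contDiffAt.isSymmSndFDerivAt (by simp; exact WithTop.coe_le_coe.mpr le_top)).eq v w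

lemma Dd_negmul {A : ℝ → ℝ} {h : ℝ × ℝ × ℝ → ℝ} (hA : ContDiff ℝ (⊤ : ℕ∞) A)
    (hh : ContDiff ℝ (⊤ : ℕ∞) h) (v s : ℝ × ℝ × ℝ) :
    Dd v (fun z => -(A z.1 * h z)) s = -(deriv A s.1 * v.1 * h s + A s.1 * Dd v h s) := by
  have h1 : DifferentiableAt ℝ (fun z : ℝ × ℝ × ℝ => A z.1) s :=
    (hA.comp contDiff_fst).differentiable (by simp) s
  rw [Dd_neg, Dd_mul h1 (hh.differentiable (by simp) s), Dd_A hA]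

lemma Dd_phi {A : ℝ → ℝ} {h : ℝ × ℝ × ℝ → ℝ} (hA : ContDiff ℝ (⊤ : ℕ∞) A)
    (hA' : ContDiff ℝ (⊤ : ℕ∞) (deriv A)) (hh : ContDiff ℝ (⊤ : ℕ∞) h) (v s : ℝ × ℝ × ℝ) :
    Dd v (fun z => -(A z.1 * h z) - deriv A z.1 * z.2.1) s =
      -(deriv A s.1 * v.1 * h s + A s.1 * Dd v h s)
        - (deriv (deriv A) s.1 * v.1 * s.2.1 + deriv A s.1 * v.2.1) := by
  have h1 : DifferentiableAt ℝ (fun z : ℝ × ℝ × ℝ => -(A z.1 * h z)) s :=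
    ((hA.comp contDiff_fst).mul hh).neg.differentiable (by simp) s
  have h2 : DifferentiableAt ℝ (fun z : ℝ × ℝ × ℝ => deriv A z.1 * z.2.1) s :=
    ((hA'.comp contDiff_fst).mul (contDiff_fst.comp contDiff_snd)).differentiable (by simp) s
  have h3 : DifferentiableAt ℝ (fun z : ℝ × ℝ × ℝ => deriv A z.1) s :=
    (hA'.comp contDiff_fst).differentiable (by simp) s
  have h4 : DifferentiableAt ℝ (fun z : ℝ × ℝ × ℝ => z.2.1) s :=
    (contDiff_fst.comp contDiff_snd).differentiable one_ne_zero s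
  rw [Dd_sub h1 h2, Dd_negmul hA hh, Dd_mul h3 h4, Dd_A hA', Dd_x]

/-- if `u` solves the rotated Euler equation `u_txy = J(u, u_xy)` and
`A : ℝ → ℝ` is an arbitrary smooth function, then `φ₇(A) = −A(t) u_y − A′(t) x` satisfies the linearized
equation `ℓ_F(φ₇(A)) = 0`. -/
theorem statement8 (u : ℝ × ℝ × ℝ → ℝ) (A : ℝ → ℝ)
    (hu : ContDiff ℝ (⊤ : ℕ∞) u) (hA : ContDiff ℝ (⊤ : ℕ∞) A)
    (heq : ∀ r, Dt (Dx (Dy u)) r = Jb u (Dx (Dy u)) r) :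
    ∀ r, lF u (fun z => -(A z.1 * Dy u z) - deriv A z.1 * z.2.1) r = 0 := by
  have hA' : ContDiff ℝ (⊤ : ℕ∞) (deriv A) := by
    exact (contDiff_infty_iff_deriv.mp hA).2
  intro r
  simp only [lF, Jb, Dt_eq, Dx_eq, Dy_eq] at heq ⊢
  have sd : ∀ {f : ℝ × ℝ × ℝ → ℝ}, ContDiff ℝ (⊤ : ℕ∞) f → ∀ s, DifferentiableAt ℝ f s :=
    fun h s => h.differentiable (by simp) s
  have huy : ContDiff ℝ (⊤ : ℕ∞) (Dd vy u) := Dd_smooth hu vy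
  have hg : ContDiff ℝ (⊤ : ℕ∞) (Dd vx (Dd vy u)) := Dd_smooth huy vx
  have huyy : ContDiff ℝ (⊤ : ℕ∞) (Dd vy (Dd vy u)) := Dd_smooth huy vy
  have hxyy : ContDiff ℝ (⊤ : ℕ∞) (Dd vx (Dd vy (Dd vy u))) := Dd_smooth huyy vx
  -- derivatives of φ
  have E1 : Dd vy (fun z => -(A z.1 * Dd vy u z) - deriv A z.1 * z.2.1)
      = fun z => -(A z.1 * Dd vy (Dd vy u) z) := by
    funext s
    rw [Dd_phi hA hA' huy vy s]
    simp [vy]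
  have E2 : Dd vx (Dd vy (fun z => -(A z.1 * Dd vy u z) - deriv A z.1 * z.2.1))
      = fun z => -(A z.1 * Dd vx (Dd vy (Dd vy u)) z) := by
    rw [E1]
    funext s
    rw [Dd_negmul hA huyy vx s]
    simp [vx]
  have E3 : Dd vt (Dd vx (Dd vy (fun z => -(A z.1 * Dd vy u z) - deriv A z.1 * z.2.1))) r
      = -(deriv A r.1 * Dd vx (Dd vy (Dd vy u)) r
          + A r.1 * Dd vt (Dd vx (Dd vy (Dd vy u))) r) := by
    rw [E2, Dd_negmul hA hxyy vt r]
    simp [vt]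
  have E4 : Dd vx (fun z => -(A z.1 * Dd vy u z) - deriv A z.1 * z.2.1) r
      = -(A r.1 * Dd vx (Dd vy u) r) - deriv A r.1 := by
    rw [Dd_phi hA hA' huy vx r]
    simp [vx]
  have E5 : Dd vy (fun z => -(A z.1 * Dd vy u z) - deriv A z.1 * z.2.1) r
      = -(A r.1 * Dd vy (Dd vy u) r) := congrFun E1 r
  have E6 : Dd vy (Dd vx (Dd vy (fun z => -(A z.1 * Dd vy u z) - deriv A z.1 * z.2.1))) r
      = -(A r.1 * Dd vy (Dd vx (Dd vy (Dd vy u))) r) := by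
    rw [E2, Dd_negmul hA hxyy vy r]
    simp [vy]
  have E7 : Dd vx (Dd vx (Dd vy (fun z => -(A z.1 * Dd vy u z) - deriv A z.1 * z.2.1))) r
      = -(A r.1 * Dd vx (Dd vx (Dd vy (Dd vy u))) r) := by
    rw [E2, Dd_negmul hA hxyy vx r]
    simp [vx]
  -- commutation of partial derivatives
  have C0 : Dd vy (Dd vx u) r = Dd vx (Dd vy u) r := congrFun (Dd_swap hu vy vx) r
  have C1 : Dd vx (Dd vy (Dd vy u)) = Dd vy (Dd vx (Dd vy u)) := Dd_swap huy vx vy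
  have C2 : Dd vt (Dd vx (Dd vy (Dd vy u))) r = Dd vy (Dd vt (Dd vx (Dd vy u))) r := by
    rw [C1]
    exact congrFun (Dd_swap hg vt vy) r
  have C3 : Dd vy (Dd vx (Dd vy (Dd vy u))) r = Dd vy (Dd vy (Dd vx (Dd vy u))) r := by
    rw [C1]
  have C4 : Dd vx (Dd vx (Dd vy (Dd vy u))) r = Dd vy (Dd vx (Dd vx (Dd vy u))) r := by
    rw [C1]
    exact congrFun (Dd_swap hg vx vy) r
  -- differentiate the equation in y
  have heqf : Dd vt (Dd vx (Dd vy u)) = fun z =>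
      Dd vx u z * Dd vy (Dd vx (Dd vy u)) z - Dd vy u z * Dd vx (Dd vx (Dd vy u)) z :=
    funext heq
  have H : Dd vy (Dd vt (Dd vx (Dd vy u))) r
      = Dd vy (Dd vx u) r * Dd vy (Dd vx (Dd vy u)) r
          + Dd vx u r * Dd vy (Dd vy (Dd vx (Dd vy u))) r
        - (Dd vy (Dd vy u) r * Dd vx (Dd vx (Dd vy u)) r
          + Dd vy u r * Dd vy (Dd vx (Dd vx (Dd vy u))) r) := by
    rw [heqf,
      Dd_sub (((Dd_smooth hu vx).mul (Dd_smooth hg vy)).differentiable (by simp) r)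
        ((huy.mul (Dd_smooth hg vx)).differentiable (by simp) r) vy,
      Dd_mul (sd (Dd_smooth hu vx) r) (sd (Dd_smooth hg vy) r) vy,
      Dd_mul (sd huy r) (sd (Dd_smooth hg vx) r) vy]
  rw [C0] at H
  rw [E3, E4, E5, E6, E7, C2, C3, C4, congrFun C1 r, H]
  ring
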